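/- Let n ≥ 1 and let M = ℤ^n + ℤ·(1/2, …, 1/2) ⊆ ℝ^n. For every odd integer q ≥ 1 and every w ∈ (1/q)M, there exists u ∈ (1/q)ℤ^n with u − w ∈ M and with every coordinate of u of absolute value strictly less than 1/2. -/

import Mathlib

open Finset

/-- The lattice `M = ℤ^n + ℤ·(1/2, …, 1/2) ⊆ ℝ^n`, the union of `ℤ^n` and its translate by
`(1/2, …, 1/2)`. -/
def halfLattice (n : ℕ) : Set (Fin n → ℝ) :=
  {u | (∀ i, ∃ m : ℤ, u i = m) ∨ (∀ i, ∃ m : ℤ, u i = m + 1/2)}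

/-!
Shift `w` by `0` or by `(1/2, …, 1/2)`, according to the coset of `M` containing `q • w`, so
that it lands in `(1/q)ℤ^n` (for the half-integer coset this is where `q` odd enters, as
`q/2 ∈ ℤ + 1/2`). Then subtract the nearest integer point. The result `u` has coordinates of
absolute value at most `1/2`, and none equals `±1/2`, since `q u_i ∈ ℤ` and `q/2 ∉ ℤ`.
-/

lemma Odd.mul_half_ne_intCast {q : ℤ} (hq : Odd q) (N : ℤ) : (q : ℝ) * (1 / 2) ≠ N := by
  intro h
  have hqN : q = 2 * N := by exact_mod_cast (by linarith : (q : ℝ) = 2 * N)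
  exact Int.not_even_iff_odd.mpr hq (hqN ▸ even_two_mul N)

lemma Odd.exists_intCast_abs_sub_lt_half {q : ℤ} (hq : Odd q) {x : ℝ}
    (hx : ∃ m : ℤ, (q : ℝ) * x = m) :
    ∃ c : ℤ, (∃ m : ℤ, (q : ℝ) * (x - c) = m) ∧ |x - c| < 1 / 2 := by
  obtain ⟨m, hm⟩ := hx
  have hint : (q : ℝ) * (x - round x) = ((m - q * round x : ℤ) : ℝ) := by
    push_cast
    rw [mul_sub, hm]
  refine ⟨round x, ⟨_, hint⟩, (abs_sub_round x).lt_of_ne fun h => ?_⟩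
  rcases abs_eq (by norm_num : (0 : ℝ) ≤ 1 / 2) |>.mp h with h | h
  · exact hq.mul_half_ne_intCast _ (h ▸ hint)
  · rw [h] at hint
    exact hq.mul_half_ne_intCast (-(m - q * round x)) (by push_cast at hint ⊢; linarith)

lemma Odd.exists_small_rep_of_mul_sub_intCast {ι : Type*} {q : ℤ} (hq : Odd q) (t : ℝ)
    (w : ι → ℝ) (hw : ∀ i, ∃ m : ℤ, (q : ℝ) * (w i - t) = m) :
    ∃ u : ι → ℝ, (∀ i, ∃ m : ℤ, (q : ℝ) * u i = m) ∧ (∀ i, ∃ m : ℤ, u i - w i = m - t) ∧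
      ∀ i, |u i| < 1 / 2 := by
  choose c hc hsmall using fun i => hq.exists_intCast_abs_sub_lt_half (hw i)
  exact ⟨fun i => w i - t - c i, hc, fun i => ⟨-c i, by push_cast; ring⟩, hsmall⟩

theorem halfLattice_small_representatives_general (n : ℕ)
    (q : ℤ) (hodd : Odd q)
    (w : Fin n → ℝ) (hw : (q : ℝ) • w ∈ halfLattice n) :
    ∃ u : Fin n → ℝ, (∀ i, ∃ m : ℤ, (q : ℝ) * u i = m) ∧ u - w ∈ halfLattice n ∧
      ∀ i, |u i| < 1/2 := by
  rcases hw with hint | hhalf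
  · obtain ⟨u, hu, hdiff, hsmall⟩ :=
      hodd.exists_small_rep_of_mul_sub_intCast 0 w (by simpa using hint)
    exact ⟨u, hu, Or.inl fun i => by simpa using hdiff i, hsmall⟩
  · have hshift : ∀ i, ∃ m : ℤ, (q : ℝ) * (w i - 1 / 2) = m := by
      obtain ⟨k, hk⟩ := hodd
      intro i
      obtain ⟨m, hm⟩ := hhalf i
      refine ⟨m - k, ?_⟩
      simp only [Pi.smul_apply, smul_eq_mul] at hm
      push_cast [hk] at hm ⊢
      linear_combination hm
    obtain ⟨u, hu, hdiff, hsmall⟩ := hodd.exists_small_rep_of_mul_sub_intCast (1 / 2) w hshift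
    refine ⟨u, hu, Or.inr fun i => ?_, hsmall⟩
    obtain ⟨m, hm⟩ := hdiff i
    exact ⟨m - 1, by simp only [Pi.sub_apply, hm]; push_cast; ring⟩

/-- For odd `q`, every class of `(1/q)M / M`, where `M = ℤ^n + ℤ·(1/2,…,1/2)`, has a
representative in `(1/q)ℤ^n` all of whose coordinates have absolute value less than `1/2`. -/
theorem halfLattice_small_representatives (n : ℕ) (hn : 1 ≤ n)
    (q : ℤ) (hq : 1 ≤ q) (hodd : Odd q)
    (w : Fin n → ℝ) (hw : (q : ℝ) • w ∈ halfLattice n) :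
    ∃ u : Fin n → ℝ, (∀ i, ∃ m : ℤ, (q : ℝ) * u i = m) ∧ u - w ∈ halfLattice n ∧
      ∀ i, |u i| < 1/2 :=
  halfLattice_small_representatives_general n q hodd w hw
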